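/- arXiv:2010.10736 — 7 statements merged into one kernel-verified Lean document; each statement's English description precedes it below -/
import Mathlib

section
/- Let F be a convex subset of a Hausdorff locally convex topological vector space X with 0 in the interior of F, and let Ω be a nonempty subset of X. If F is bounded (in the topological vector space sense), then the F-closure cl_F(Ω) := ⋂_{ε>0} (Ω − ε·F) equals the topological closure of Ω. -/
/-! Since `0 ∈ interior F`, each `x + εF` is a neighbourhood of `x`, so every point of the closure
lies in every `Ω - εF`. Conversely, boundedness of `F` means that `εF` shrinks into any
neighbourhood of `0` as `ε → 0`, so a point of every `Ω - εF` is a limit of points of `Ω`. -/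

open Set Filter Topology

variable {X : Type*} [AddCommGroup X] [Module ℝ X] [TopologicalSpace X]
  [IsTopologicalAddGroup X] [ContinuousSMul ℝ X] [T2Space X] [LocallyConvexSpace ℝ X]

open scoped Pointwise

theorem closure_subset_sub_of_mem_nhds_zero {G : Type*} [AddGroup G] [TopologicalSpace G]
    [ContinuousConstVAdd G G] (s : Set G) {V : Set G} (hV : V ∈ 𝓝 0) :
    closure s ⊆ s - V := by
  intro y hy
  obtain ⟨_, ⟨_, rfl, v, hv, rfl⟩, hz⟩ :=
    mem_closure_iff_nhds.mp hy ({y} + V) (singleton_add_mem_nhds_of_nhds_zero y hV)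
  exact ⟨_, hz, v, hv, add_sub_cancel_right _ v⟩

theorem mem_closure_of_forall_mem_sub_smul {E : Type*} [AddCommGroup E] [Module ℝ E]
    [TopologicalSpace E] [ContinuousAdd E] {F s : Set E} {x : E}
    (hF : Bornology.IsVonNBounded ℝ F) (hx : ∀ ε : ℝ, 0 < ε → x ∈ s - ε • F) :
    x ∈ closure s := by
  rw [mem_closure_iff_nhds]
  intro U hU
  have hU₀ : (x + ·) ⁻¹' U ∈ 𝓝 (0 : E) :=
    (continuous_const_add x).continuousAt.preimage_mem_nhds (by rwa [add_zero])
  have hsmall : ∀ᶠ ε : ℝ in 𝓝[>] 0, ε • F ⊆ (x + ·) ⁻¹' U ∧ 0 < ε :=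
    ((hF.tendsto_smallSets_nhds.eventually (eventually_smallSets_subset.mpr hU₀)).filter_mono
      nhdsWithin_le_nhds).and self_mem_nhdsWithin
  obtain ⟨ε, hεF, hε⟩ := hsmall.exists
  obtain ⟨ω, hω, _, ⟨f, hf, rfl⟩, rfl⟩ := hx ε hε
  exact ⟨ω, by simpa using hεF ⟨f, hf, rfl⟩, hω⟩

theorem mem_sub_smul_set_iff {𝕜 E : Type*} [AddGroup E] [SMul 𝕜 E] {s t : Set E} {a : 𝕜}
    {x : E} : x ∈ s - a • t ↔ ∃ ω ∈ s, ∃ f ∈ t, x = ω - a • f := by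
  constructor
  · rintro ⟨ω, hω, _, ⟨f, hf, rfl⟩, rfl⟩
    exact ⟨ω, hω, f, hf, rfl⟩
  · rintro ⟨ω, hω, f, hf, rfl⟩
    exact ⟨ω, hω, _, ⟨f, hf, rfl⟩, rfl⟩

theorem clF_eq_closure_general (F Ω : Set X) (h0 : (0 : X) ∈ interior F)
    (hbd : Bornology.IsVonNBounded ℝ F) :
    {x : X | ∀ ε : ℝ, 0 < ε → ∃ ω ∈ Ω, ∃ f ∈ F, x = ω - ε • f} = closure Ω := by
  ext x
  simp only [mem_ofPred_eq, ← mem_sub_smul_set_iff]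
  refine ⟨mem_closure_of_forall_mem_sub_smul hbd, fun hx ε hε => ?_⟩
  have hεF : ε • F ∈ 𝓝 (0 : X) :=
    (set_smul_mem_nhds_zero_iff hε.ne').mpr (mem_interior_iff_mem_nhds.mp h0)
  exact closure_subset_sub_of_mem_nhds_zero Ω hεF hx

/-- If the dynamics F is bounded, the F-closure of Ω coincides with the topological closure. -/
theorem clF_eq_closure (F Ω : Set X) (hconv : Convex ℝ F) (h0 : (0 : X) ∈ interior F)
    (hΩ : Ω.Nonempty) (hbd : Bornology.IsVonNBounded ℝ F) :
    {x : X | ∀ ε : ℝ, 0 < ε → ∃ ω ∈ Ω, ∃ f ∈ F, x = ω - ε • f} = closure Ω :=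
  clF_eq_closure_general F Ω h0 hbd
end

section
/- Let F be a closed convex subset of a Hausdorff locally convex topological vector space X with 0 ∈ int(F), and let Ω be a sequentially compact subset of X. Then cl_F(Ω) = Ω − F_∞, where F_∞ is the horizon cone of F. -/
open Set Filter Topology Pointwise

/-! If `x = ωₙ - εₙ • fₙ` with `εₙ → 0`, a subsequence of `ωₙ` converges to some `ω ∈ Ω`, so
`εₙ • fₙ → ω - x`. As `F` is convex and contains `0`, `εF ⊆ tF` once `ε ≤ t`, and `tF` is closed,
hence `ω - x` lies in every `tF`. -/

variable {X : Type*} [AddCommGroup X] [Module ℝ X] [TopologicalSpace X]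
  [IsTopologicalAddGroup X] [ContinuousSMul ℝ X] [T2Space X] [LocallyConvexSpace ℝ X]

theorem Convex.smul_mem_smul_of_le {𝕜 E : Type*} [Field 𝕜] [LinearOrder 𝕜]
    [IsStrictOrderedRing 𝕜] [AddCommGroup E] [Module 𝕜 E] {F : Set E} (hF : Convex 𝕜 F)
    (h0 : (0 : E) ∈ F) {f : E} (hf : f ∈ F) {s t : 𝕜} (hs : 0 ≤ s) (hst : s ≤ t) : s • f ∈ t • F := by
  rcases hs.eq_or_lt with rfl | hs
  · simpa using smul_mem_smul_set (a := t) h0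
  have ht : 0 < t := hs.trans_le hst
  have hrescale : s • f = t • ((s / t) • f) := by
    rw [smul_smul, mul_div_cancel₀ _ ht.ne']
  rw [hrescale]
  exact smul_mem_smul_set
    (hF.smul_mem_of_zero_mem h0 hf ⟨by positivity, div_le_one_of_le₀ hst ht.le⟩)

section HorizonCone

variable {E : Type*} [AddCommGroup E] [Module ℝ E] [TopologicalSpace E]

def horizonCone (F : Set E) : Set E := ⋂ t ∈ Ioi (0 : ℝ), t • F

variable [ContinuousConstSMul ℝ E]

theorem mem_horizonCone_of_tendsto {ι : Type*} {l : Filter ι} [l.NeBot] {F : Set E}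
    (hcl : IsClosed F) (hconv : Convex ℝ F) (h0 : (0 : E) ∈ F) {c : ι → ℝ} {f : ι → E} {d : E}
    (hc0 : ∀ i, 0 ≤ c i) (hc : Tendsto c l (𝓝 0)) (hf : ∀ i, f i ∈ F)
    (hd : Tendsto (fun i => c i • f i) l (𝓝 d)) : d ∈ horizonCone F := by
  refine mem_iInter₂.2 fun t (ht : 0 < t) => ?_
  refine (hcl.smul_of_ne_zero ht.ne').mem_of_tendsto hd ?_
  filter_upwards [hc.eventually (ge_mem_nhds ht)] with i hi
  exact hconv.smul_mem_smul_of_le h0 (hf i) (hc0 i) hi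

theorem IsSeqCompact.exists_eq_sub_horizonCone [ContinuousSub E] {Ω F : Set E}
    (hΩ : IsSeqCompact Ω) (hcl : IsClosed F) (hconv : Convex ℝ F) (h0 : (0 : E) ∈ F) {x : E}
    (hx : ∀ ε : ℝ, 0 < ε → ∃ ω ∈ Ω, ∃ f ∈ F, x = ω - ε • f) :
    ∃ ω ∈ Ω, ∃ d ∈ horizonCone F, x = ω - d := by
  choose ω hω f hf hxω using fun n : ℕ => hx (1 / ((n : ℝ) + 1)) Nat.one_div_pos_of_nat
  obtain ⟨a, ha, φ, hφ, hωa⟩ := hΩ hω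
  refine ⟨a, ha, a - x, ?_, (sub_sub_cancel a x).symm⟩
  have hshift : ∀ n, ω n - x = (1 / ((n : ℝ) + 1)) • f n := fun n => by
    rw [hxω n, sub_sub_cancel]
  refine mem_horizonCone_of_tendsto hcl hconv h0 (fun _ => Nat.one_div_pos_of_nat.le)
    (tendsto_one_div_add_atTop_nhds_zero_nat.comp hφ.tendsto_atTop) (fun k => hf (φ k)) ?_
  simpa only [Function.comp_def, hshift] using hωa.sub_const x

end HorizonCone

theorem clF_eq_sub_horizon_general (F Ω : Set X) (hcl : IsClosed F) (hconv : Convex ℝ F)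
    (h0 : (0 : X) ∈ interior F) (hΩ : IsSeqCompact Ω) :
    {x : X | ∀ ε : ℝ, 0 < ε → ∃ ω ∈ Ω, ∃ f ∈ F, x = ω - ε • f} =
      {x : X | ∃ ω ∈ Ω, ∃ d ∈ ⋂ t ∈ Set.Ioi (0 : ℝ), t • F, x = ω - d} := by
  refine Subset.antisymm
    (fun x hx => hΩ.exists_eq_sub_horizonCone hcl hconv (interior_subset h0) hx) ?_
  rintro _ ⟨ω, hω, d, hd, rfl⟩ ε hε
  obtain ⟨f, hf, rfl⟩ := mem_iInter₂.1 hd ε hε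
  exact ⟨ω, hω, f, hf, rfl⟩

/-- For sequentially compact Ω, the F-closure of Ω equals Ω − F_∞. -/
theorem clF_eq_sub_horizon (F Ω : Set X) (hcl : IsClosed F) (hconv : Convex ℝ F)
    (h0 : (0 : X) ∈ interior F) (hΩne : Ω.Nonempty) (hΩ : IsSeqCompact Ω) :
    {x : X | ∀ ε : ℝ, 0 < ε → ∃ ω ∈ Ω, ∃ f ∈ F, x = ω - ε • f} =
      {x : X | ∃ ω ∈ Ω, ∃ d ∈ ⋂ t ∈ Set.Ioi (0 : ℝ), t • F, x = ω - d} :=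
  clF_eq_sub_horizon_general F Ω hcl hconv h0 hΩ
end

section
/- Let F be a convex subset of a Hausdorff locally convex topological vector space X with 0 ∈ int(F), and let Ω be a nonempty subset of X. Then T_Ω^F(x) = inf_{w ∈ Ω} ρ_F(w − x) for all x ∈ X, where ρ_F is the Minkowski gauge of F. -/
open Set Filter Topology Pointwise

variable {X : Type*} [AddCommGroup X] [Module ℝ X] [TopologicalSpace X]
  [IsTopologicalAddGroup X] [ContinuousSMul ℝ X] [T2Space X] [LocallyConvexSpace ℝ X]

/-- The set of admissible times in the definition of the minimal time function. -/
def timeSet (F Ω : Set X) (x : X) : Set ℝ := {t : ℝ | 0 < t ∧ ∃ f ∈ F, x + t • f ∈ Ω}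

/-- The minimal time function with target Ω and constant dynamics F. -/
noncomputable def minTime (F Ω : Set X) (x : X) : ℝ := sInf (timeSet F Ω x)

/-! A time `t > 0` is admissible from `x` exactly when `w - x ∈ t • F` for some `w ∈ Ω`, so the
admissible times form the union over `w ∈ Ω` of the sets whose infima define the gauges
`ρ_F (w - x)`. Since `0 ∈ int F`, the set `F` is absorbent and each of these sets is nonempty,
so the infimum of the union is the infimum of the gauges. -/

/-- An empty piece would contribute its junk infimum `sInf ∅`, hence `hne`. -/
theorem csInf_biUnion_eq_csInf_image {α ι : Type*} [ConditionallyCompleteLattice α] {s : Set ι}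
    {S : ι → Set α} (hne : ∀ i ∈ s, (S i).Nonempty) (hbdd : BddBelow (⋃ i ∈ s, S i)) :
    sInf (⋃ i ∈ s, S i) = sInf ((fun i => sInf (S i)) '' s) := by
  obtain rfl | ⟨j, hj⟩ := s.eq_empty_or_nonempty
  · simp
  have hU : (⋃ i ∈ s, S i).Nonempty := (hne j hj).mono (subset_biUnion_of_mem hj)
  have hS_bdd : ∀ i ∈ s, BddBelow (S i) := fun i hi => hbdd.mono (subset_biUnion_of_mem hi)
  apply le_antisymm
  · refine le_csInf ⟨_, mem_image_of_mem _ hj⟩ ?_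
    rintro _ ⟨i, hi, rfl⟩
    exact csInf_le_csInf hbdd (hne i hi) (subset_biUnion_of_mem hi)
  · have h_img_bdd : BddBelow ((fun i => sInf (S i)) '' s) := by
      obtain ⟨b, hb⟩ := hbdd
      refine ⟨b, ?_⟩
      rintro _ ⟨i, hi, rfl⟩
      exact le_csInf (hne i hi) fun r hr => hb (mem_biUnion hi hr)
    refine le_csInf hU fun r hr => ?_
    obtain ⟨i, hi, hri⟩ := mem_iUnion₂.1 hr
    exact csInf_le_of_le h_img_bdd (mem_image_of_mem _ hi) (csInf_le (hS_bdd i hi) hri)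

theorem timeSet_eq_biUnion {E : Type*} [AddCommGroup E] [Module ℝ E] (F Ω : Set E) (x : E) :
    timeSet F Ω x = ⋃ w ∈ Ω, {r ∈ Ioi (0 : ℝ) | w - x ∈ r • F} := by
  ext t
  simp only [timeSet, mem_ofPred_eq, mem_iUnion, mem_Ioi, exists_prop, mem_smul_set]
  constructor
  · rintro ⟨ht, f, hf, hw⟩
    exact ⟨_, hw, ht, f, hf, by abel⟩
  · rintro ⟨w, hw, ht, f, hf, hfw⟩
    refine ⟨ht, f, hf, ?_⟩
    rwa [hfw, add_sub_cancel]

theorem minTime_eq_sInf_gauge_of_absorbent {E : Type*} [AddCommGroup E] [Module ℝ E] {F : Set E}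
    (hF : Absorbent ℝ F) (Ω : Set E) (x : E) :
    minTime F Ω x = sInf ((fun w => gauge F (w - x)) '' Ω) := by
  rw [minTime, timeSet_eq_biUnion, csInf_biUnion_eq_csInf_image]
  · rfl
  · exact fun w _ => hF.gauge_set_nonempty
  · refine ⟨0, fun r hr => ?_⟩
    obtain ⟨w, -, hrw⟩ := mem_iUnion₂.1 hr
    exact hrw.1.le

theorem minTime_eq_inf_gauge_general (F Ω : Set X) (h0 : (0 : X) ∈ interior F) (x : X) :
    minTime F Ω x = sInf ((fun w => gauge F (w - x)) '' Ω) :=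
  minTime_eq_sInf_gauge_of_absorbent (absorbent_nhds_zero (mem_interior_iff_mem_nhds.1 h0)) Ω x

/-- The minimal time function is the infimum of the Minkowski gauge over the target. -/
theorem minTime_eq_inf_gauge (F Ω : Set X) (hconv : Convex ℝ F) (h0 : (0 : X) ∈ interior F)
    (hΩ : Ω.Nonempty) (x : X) :
    minTime F Ω x = sInf ((fun w => gauge F (w - x)) '' Ω) :=
  minTime_eq_inf_gauge_general F Ω h0 x
end

section
/- Let F be a convex subset of a Hausdorff locally convex topological vector space X with 0 ∈ int(F), and let Ω be a nonempty subset of X. Then T_Ω^F(x) = T_{cl(Ω)}^F(x) for all x ∈ X, i.e., the minimal time functions with target Ω and with target the closure of Ω coincide. -/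
open Set Filter Topology Pointwise

variable {X : Type*} [AddCommGroup X] [Module ℝ X] [TopologicalSpace X]
  [IsTopologicalAddGroup X] [ContinuousSMul ℝ X] [T2Space X] [LocallyConvexSpace ℝ X]

/-! Every time admissible for `closure Ω` is a limit from above of times admissible for `Ω`:
if `x + t • f` is a limit of points of `Ω` and `s > t`, then `x + t • f + (s - t) • F` is a
neighbourhood of `x + t • f` contained, by convexity, in `x + s • F`, so it meets `Ω`. -/

theorem csInf_eq_csInf_of_subset_of_forall_lt_mem {α : Type*} [ConditionallyCompleteLinearOrder α]
    [DenselyOrdered α] [NoMaxOrder α] {A B : Set α} (hB : BddBelow B) (hAB : A ⊆ B)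
    (hBA : ∀ t ∈ B, ∀ s, t < s → s ∈ A) : sInf A = sInf B := by
  rcases B.eq_empty_or_nonempty with rfl | ⟨t₀, ht₀⟩
  · rw [subset_empty_iff.1 hAB]
  obtain ⟨s₀, hs₀⟩ := exists_gt t₀
  have hA : A.Nonempty := ⟨s₀, hBA t₀ ht₀ s₀ hs₀⟩
  refine le_antisymm (le_csInf ⟨t₀, ht₀⟩ fun t ht => ?_) (csInf_le_csInf hB hA hAB)
  exact le_of_forall_gt_imp_ge_of_dense fun s hs => csInf_le (hB.mono hAB) (hBA t ht s hs)

section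

variable {E : Type*} [AddCommGroup E] [Module ℝ E]

theorem timeSet_mono {F Ω Ω' : Set E} (h : Ω ⊆ Ω') (x : E) : timeSet F Ω x ⊆ timeSet F Ω' x :=
  fun _ ⟨ht, f, hf, hx⟩ => ⟨ht, f, hf, h hx⟩

theorem Convex.smul_add_sub_smul_mem {F : Set E} (hF : Convex ℝ F) {f u : E} (hf : f ∈ F)
    (hu : u ∈ F) {t s : ℝ} (ht : 0 < t) (hts : t < s) :
    ∃ g ∈ F, t • f + (s - t) • u = s • g := by
  have hs : 0 < s := ht.trans hts
  refine ⟨(t / s) • f + ((s - t) / s) • u,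
    hF hf hu (by positivity) (div_nonneg (sub_nonneg.2 hts.le) hs.le) (by field_simp; ring), ?_⟩
  rw [smul_add, smul_smul, smul_smul, mul_div_cancel₀ _ hs.ne', mul_div_cancel₀ _ hs.ne']

theorem mem_timeSet_of_mem_timeSet_closure [TopologicalSpace E] [IsTopologicalAddGroup E]
    [ContinuousConstSMul ℝ E] {F Ω : Set E} (hF : Convex ℝ F)
    (h0 : (0 : E) ∈ interior F) {x : E} {t s : ℝ} (ht : t ∈ timeSet F (closure Ω) x)
    (hts : t < s) : s ∈ timeSet F Ω x := by
  obtain ⟨ht, f, hf, hy⟩ := ht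
  have hU : (s - t) • F ∈ 𝓝 (0 : E) :=
    (set_smul_mem_nhds_zero_iff (sub_pos.2 hts).ne').2 (mem_interior_iff_mem_nhds.1 h0)
  obtain ⟨z, hzΩ, u, hu, hz⟩ := mem_closure_iff_nhds_zero.1 hy _ hU
  replace hz : (s - t) • u = z - (x + t • f) := hz
  obtain ⟨g, hg, hfug⟩ := hF.smul_add_sub_smul_mem hf hu ht hts
  refine ⟨ht.trans hts, g, hg, ?_⟩
  rwa [← hfug, ← add_assoc, hz, add_sub_cancel]

end

theorem minTime_closure_general (F Ω : Set X) (hconv : Convex ℝ F) (h0 : (0 : X) ∈ interior F)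
    (x : X) :
    minTime F Ω x = minTime F (closure Ω) x :=
  csInf_eq_csInf_of_subset_of_forall_lt_mem ⟨0, fun _ ht => ht.1.le⟩
    (timeSet_mono subset_closure x) fun _ ht _ hts =>
      mem_timeSet_of_mem_timeSet_closure hconv h0 ht hts

/-- The minimal time functions with target Ω and with target the closure of Ω coincide. -/
theorem minTime_closure (F Ω : Set X) (hconv : Convex ℝ F) (h0 : (0 : X) ∈ interior F)
    (hΩ : Ω.Nonempty) (x : X) :
    minTime F Ω x = minTime F (closure Ω) x :=
  minTime_closure_general F Ω hconv h0 x
end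

section
/- Let F be a convex subset of a Hausdorff locally convex topological vector space X with 0 ∈ int(F), and let Ω be a nonempty subset of X. Then for all x, y ∈ X: |T_Ω^F(x) − T_Ω^F(y)| ≤ max{ρ_F(y − x), ρ_F(x − y)}. Consequently T_Ω^F is continuous on X. -/
/-!
If `y + t • f ∈ Ω` with `f ∈ F` and `y - x = s • g` with `g ∈ F`, then `x` reaches the same point
of `Ω` in time `t + s` along the point `(t • f + s • g) / (t + s)` of the convex set `F`. Taking
`s` just above `ρ_F(y - x)` gives `T(x) ≤ T(y) + ρ_F(y - x)`, and exchanging `x` and `y` gives the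
estimate. Continuity follows because the gauge of a convex neighbourhood of `0` is continuous.
-/

open Set Filter Topology Pointwise

variable {X : Type*} [AddCommGroup X] [Module ℝ X] [TopologicalSpace X]
  [IsTopologicalAddGroup X] [ContinuousSMul ℝ X] [T2Space X] [LocallyConvexSpace ℝ X]

theorem continuous_of_abs_sub_le {G : Type*} [AddGroup G] [TopologicalSpace G] [ContinuousSub G]
    {f g : G → ℝ} (hg : ContinuousAt g 0) (hg₀ : g 0 = 0) (hfg : ∀ x y, |f x - f y| ≤ g (x - y)) :
    Continuous f := by
  refine continuous_iff_continuousAt.2 fun x₀ => ?_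
  have hsub : Tendsto (fun x => x - x₀) (𝓝 x₀) (𝓝 0) := by
    simpa only [sub_self] using (continuous_sub_right x₀).tendsto x₀
  have hg_sub : Tendsto (fun x => g (x - x₀)) (𝓝 x₀) (𝓝 0) := hg₀ ▸ hg.tendsto.comp hsub
  rw [ContinuousAt, tendsto_iff_norm_sub_tendsto_zero]
  exact squeeze_zero (fun _ => norm_nonneg _) (fun x => hfg x x₀) hg_sub

section MinimalTime

variable {E : Type*} [AddCommGroup E] [Module ℝ E] {F Ω : Set E}

theorem mem_smul_of_gauge_lt (hF : Convex ℝ F) (hFa : Absorbent ℝ F) {z : E} {a : ℝ}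
    (hz : gauge F z < a) : z ∈ a • F := by
  have ha : 0 < a := (gauge_nonneg z).trans_lt hz
  rw [mem_smul_set_iff_inv_smul_mem₀ ha.ne']
  refine setOfPred_gauge_lt_one_subset_self hF hFa.zero_mem hFa ?_
  rw [mem_ofPred_eq, gauge_smul_of_nonneg (inv_nonneg.2 ha.le), smul_eq_mul]
  exact (inv_mul_lt_one₀ ha).2 hz

theorem timeSet_bddBelow (F Ω : Set E) (x : E) : BddBelow (timeSet F Ω x) :=
  ⟨0, fun _ ht => ht.1.le⟩

theorem timeSet_nonempty (hF : Convex ℝ F) (hFa : Absorbent ℝ F) (hΩ : Ω.Nonempty) (x : E) :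
    (timeSet F Ω x).Nonempty := by
  obtain ⟨ω, hω⟩ := hΩ
  have hlt : gauge F (ω - x) < gauge F (ω - x) + 1 := lt_add_one _
  obtain ⟨f, hf, hωx : _ • f = ω - x⟩ := mem_smul_of_gauge_lt hF hFa hlt
  exact ⟨_, (gauge_nonneg _).trans_lt hlt, f, hf, by rwa [hωx, add_sub_cancel]⟩

theorem add_mem_timeSet (hF : Convex ℝ F) {x y : E} {t s : ℝ} (ht : t ∈ timeSet F Ω y)
    (hs : 0 ≤ s) (hyx : y - x ∈ s • F) : t + s ∈ timeSet F Ω x := by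
  obtain ⟨ht₀, f, hf, hyf⟩ := ht
  obtain ⟨g, hg, hgyx : s • g = y - x⟩ := hyx
  obtain ⟨h, hh, hfg⟩ := hF.exists_mem_add_smul_eq hf hg ht₀.le hs
  refine ⟨add_pos_of_pos_of_nonneg ht₀ hs, h, hh, ?_⟩
  rwa [hfg, hgyx, add_comm (t • f), ← add_assoc, add_sub_cancel]

theorem minTime_le_add_gauge (hF : Convex ℝ F) (hFa : Absorbent ℝ F) (hΩ : Ω.Nonempty)
    (x y : E) : minTime F Ω x ≤ minTime F Ω y + gauge F (y - x) := by
  refine le_of_forall_pos_le_add fun ε hε => ?_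
  have hlt : gauge F (y - x) < gauge F (y - x) + ε := lt_add_of_pos_right _ hε
  have hyx := mem_smul_of_gauge_lt hF hFa hlt
  have : minTime F Ω x - (gauge F (y - x) + ε) ≤ minTime F Ω y :=
    le_csInf (timeSet_nonempty hF hFa hΩ y) fun t ht => sub_le_iff_le_add.2 <|
      csInf_le (timeSet_bddBelow F Ω x) <|
        add_mem_timeSet hF ht ((gauge_nonneg _).trans hlt.le) hyx
  linarith

theorem abs_minTime_sub_le (hF : Convex ℝ F) (hFa : Absorbent ℝ F) (hΩ : Ω.Nonempty) (x y : E) :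
    |minTime F Ω x - minTime F Ω y| ≤ max (gauge F (y - x)) (gauge F (x - y)) := by
  have hxy := minTime_le_add_gauge hF hFa hΩ x y
  have hyx := minTime_le_add_gauge hF hFa hΩ y x
  rw [abs_sub_le_iff]
  constructor <;> linarith [le_max_left (gauge F (y - x)) (gauge F (x - y)),
    le_max_right (gauge F (y - x)) (gauge F (x - y))]

end MinimalTime

/-- Estimate of the variation of the minimal time function via the Minkowski gauge,
together with its continuity. -/
theorem minTime_gauge_estimate (F Ω : Set X) (hconv : Convex ℝ F)
    (h0 : (0 : X) ∈ interior F) (hΩ : Ω.Nonempty) :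
    (∀ x y : X, |minTime F Ω x - minTime F Ω y| ≤ max (gauge F (y - x)) (gauge F (x - y))) ∧
      Continuous (minTime F Ω) := by
  have hF₀ : F ∈ 𝓝 (0 : X) := mem_interior_iff_mem_nhds.1 h0
  have estimate := abs_minTime_sub_le hconv (absorbent_nhds_zero hF₀) hΩ
  refine ⟨estimate, continuous_of_abs_sub_le (g := fun z => max (gauge F (-z)) (gauge F z)) ?_
    (by simp only [neg_zero, gauge_zero, max_self]) fun x y => by
      simpa only [neg_sub] using estimate x y⟩
  have hgauge := continuous_gauge hconv hF₀
  exact ((hgauge.comp continuous_neg).max hgauge).continuousAt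
end

section
/- Let F be a convex subset of a Hausdorff locally convex topological vector space X with 0 ∈ int(F), and let Ω be a nonempty convex subset of X. Then for every x̄ ∈ Ω, the convex subdifferential of T_Ω^F at x̄ equals N(x̄; Ω) ∩ C*, where C* := {x* ∈ X* | σ_F(−x*) ≤ 1} and σ_F is the support function of F. -/
open Set Filter Topology Pointwise

variable {X : Type*} [AddCommGroup X] [Module ℝ X] [TopologicalSpace X]
  [IsTopologicalAddGroup X] [ContinuousSMul ℝ X] [T2Space X] [LocallyConvexSpace ℝ X]

/-- The convex subdifferential of the minimal time function at a point. -/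
def subdiffMinTime (F Ω : Set X) (x₀ : X) : Set (X →L[ℝ] ℝ) :=
  {p : X →L[ℝ] ℝ | ∀ x : X, p (x - x₀) ≤ minTime F Ω x - minTime F Ω x₀}

/-- The normal cone to a set A at x₀. -/
def normalCone (A : Set X) (x₀ : X) : Set (X →L[ℝ] ℝ) :=
  {p : X →L[ℝ] ℝ | ∀ x ∈ A, p (x - x₀) ≤ 0}

/-! Each point of the target is reached in any positive time (with velocity `0 ∈ F`), so
`T_Ω^F` vanishes on `Ω`. Hence a subgradient at `x̄ ∈ Ω` is normal to `Ω`, and testing it at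
`x̄ - f`, which reaches `Ω` in time `1`, gives `-⟨x*, f⟩ ≤ 1`. Conversely, if `x + t f ∈ Ω` then
`⟨x*, x - x̄⟩ ≤ -t ⟨x*, f⟩ ≤ t`; taking the infimum over `t` needs the time set to be nonempty,
which holds because `F` is a neighbourhood of `0`, hence absorbent. -/

section

variable {E : Type*} [AddCommGroup E] [Module ℝ E] {F Ω : Set E}

namespace minTime

lemma timeSet_bddBelow (x : E) : BddBelow (timeSet F Ω x) :=
  ⟨0, fun _ ht => ht.1.le⟩

lemma le_of_add_smul_mem {x f : E} {t : ℝ} (ht : 0 < t) (hf : f ∈ F) (hx : x + t • f ∈ Ω) :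
    minTime F Ω x ≤ t :=
  csInf_le (timeSet_bddBelow x) ⟨ht, f, hf, hx⟩

lemma timeSet_eq_Ioi_of_mem (h0 : (0 : E) ∈ F) {x : E} (hx : x ∈ Ω) :
    timeSet F Ω x = Ioi 0 :=
  Subset.antisymm (fun _ ht => ht.1) fun _ ht => ⟨ht, 0, h0, by simpa using hx⟩

lemma eq_zero_of_mem (h0 : (0 : E) ∈ F) {x : E} (hx : x ∈ Ω) : minTime F Ω x = 0 := by
  rw [minTime, timeSet_eq_Ioi_of_mem h0 hx, csInf_Ioi]

lemma timeSet_nonempty [TopologicalSpace E] [ContinuousSMul ℝ E] (hF : F ∈ 𝓝 0)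
    (hΩ : Ω.Nonempty) (x : E) : (timeSet F Ω x).Nonempty := by
  obtain ⟨y, hy⟩ := hΩ
  obtain ⟨r, hr, habs⟩ := (absorbent_nhds_zero (𝕜 := ℝ) hF (y - x)).exists_pos
  obtain ⟨f, hf, hrf⟩ : y - x ∈ r • F :=
    habs r (by rw [Real.norm_of_nonneg hr.le]) (mem_singleton _)
  refine ⟨r, hr, f, hf, ?_⟩
  rwa [show r • f = y - x from hrf, add_sub_cancel]

end minTime

open minTime

variable [TopologicalSpace E] {x₀ : E} {p : E →L[ℝ] ℝ}

lemma mem_normalCone_of_mem_subdiffMinTime (h0 : (0 : E) ∈ F) (hx₀ : x₀ ∈ Ω)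
    (hp : p ∈ subdiffMinTime F Ω x₀) : p ∈ normalCone Ω x₀ := fun x hx => by
  simpa [eq_zero_of_mem h0 hx, eq_zero_of_mem h0 hx₀] using hp x

lemma neg_apply_le_one_of_mem_subdiffMinTime (h0 : (0 : E) ∈ F) (hx₀ : x₀ ∈ Ω)
    (hp : p ∈ subdiffMinTime F Ω x₀) {f : E} (hf : f ∈ F) : -p f ≤ 1 :=
  calc -p f = p (x₀ - f - x₀) := by simp
    _ ≤ minTime F Ω (x₀ - f) - minTime F Ω x₀ := hp _
    _ ≤ 1 := by
      rw [eq_zero_of_mem h0 hx₀, sub_zero]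
      exact le_of_add_smul_mem one_pos hf (by simpa using hx₀)

lemma mem_subdiffMinTime_of_mem_normalCone [ContinuousSMul ℝ E] (hF : F ∈ 𝓝 0) (hx₀ : x₀ ∈ Ω)
    (hN : p ∈ normalCone Ω x₀) (hC : ∀ f ∈ F, -p f ≤ 1) : p ∈ subdiffMinTime F Ω x₀ := by
  intro x
  rw [eq_zero_of_mem (mem_of_mem_nhds hF) hx₀, sub_zero]
  refine le_csInf (timeSet_nonempty hF ⟨x₀, hx₀⟩ x) ?_
  rintro t ⟨ht, f, hf, hmem⟩
  have hsplit : p (x + t • f - x₀) = p (x - x₀) + t * p f := by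
    rw [show x + t • f - x₀ = (x - x₀) + t • f by abel, map_add, map_smul, smul_eq_mul]
  have hnormal := hN _ hmem
  have hspeed := mul_le_mul_of_nonneg_left (hC f hf) ht.le
  linarith

end

theorem subdiff_minTime_at_target_general (F Ω : Set X)
    (h0 : (0 : X) ∈ interior F)
    (x₀ : X) (hx₀ : x₀ ∈ Ω) :
    subdiffMinTime F Ω x₀ =
      normalCone Ω x₀ ∩ {p : X →L[ℝ] ℝ | ∀ f ∈ F, -(p f) ≤ 1} := by
  have hF : F ∈ 𝓝 0 := mem_interior_iff_mem_nhds.mp h0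
  ext p
  exact ⟨fun hp => ⟨mem_normalCone_of_mem_subdiffMinTime (mem_of_mem_nhds hF) hx₀ hp,
      fun _ hf => neg_apply_le_one_of_mem_subdiffMinTime (mem_of_mem_nhds hF) hx₀ hp hf⟩,
    fun ⟨hN, hC⟩ => mem_subdiffMinTime_of_mem_normalCone hF hx₀ hN hC⟩

/-- Subdifferential of the minimal time function at target points:
∂T_Ω^F(x̄) = N(x̄; Ω) ∩ C*, where C* = {x* | σ_F(−x*) ≤ 1}. -/
theorem subdiff_minTime_at_target (F Ω : Set X) (hconv : Convex ℝ F)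
    (h0 : (0 : X) ∈ interior F) (hΩne : Ω.Nonempty) (hΩ : Convex ℝ Ω)
    (x₀ : X) (hx₀ : x₀ ∈ Ω) :
    subdiffMinTime F Ω x₀ =
      normalCone Ω x₀ ∩ {p : X →L[ℝ] ℝ | ∀ f ∈ F, -(p f) ≤ 1} :=
  subdiff_minTime_at_target_general F Ω h0 x₀ hx₀
end

section
/- Let Ω be a proper, closed, convex subset of ℝⁿ with the Euclidean norm. If x̄ lies in the interior of Ω and w̄ is a Euclidean projection of x̄ onto the closure of the complement Ωᶜ (i.e., w̄ ∈ cl(Ωᶜ) with ‖x̄ − w̄‖ = d(x̄; cl(Ωᶜ))), then w̄ − x̄ ∈ N(w̄; Ω), the normal cone to Ω at w̄. -/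
/-!
Write `r = ‖x̄ - w̄‖ = d(x̄; cl Ωᶜ)`, so the open ball `B(x̄, r)` lies in `int Ω`. If some `x ∈ Ω`
had `⟪w̄ - x̄, x - w̄⟫ > 0`, then pushing `w̄` slightly away from `x` would land in that ball, at a
point `z` with `w̄` in the open segment `(z, x)`. By convexity `w̄ ∈ int Ω`, contradicting
`w̄ ∈ cl Ωᶜ`.
-/

open Set Metric

open scoped RealInnerProductSpace

theorem self_mem_openSegment_sub_smul {𝕜 E : Type*} [Field 𝕜] [LinearOrder 𝕜]
    [IsStrictOrderedRing 𝕜] [AddCommGroup E] [Module 𝕜 E] (w x : E) {t : 𝕜} (ht : 0 < t) :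
    w ∈ openSegment 𝕜 (w - t • (x - w)) x := by
  have h1t : 1 + t ≠ 0 := by positivity
  refine ⟨(1 + t)⁻¹, t * (1 + t)⁻¹, by positivity, by positivity, by field_simp, ?_⟩
  match_scalars <;> field_simp <;> ring

theorem exists_pos_norm_sub_smul_lt {E : Type*} [NormedAddCommGroup E] [InnerProductSpace ℝ E]
    {v d : E} (h : 0 < ⟪v, d⟫) : ∃ s : ℝ, 0 < s ∧ ‖v - s • d‖ < ‖v‖ := by
  have hd : d ≠ 0 := by rintro rfl; simp at h
  -- the step to the orthogonal projection of `v` onto `(ℝ d)ᗮ`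
  refine ⟨⟪v, d⟫ / ‖d‖ ^ 2, by positivity, ?_⟩
  have hsq : ‖v - (⟪v, d⟫ / ‖d‖ ^ 2) • d‖ ^ 2 = ‖v‖ ^ 2 - ⟪v, d⟫ ^ 2 / ‖d‖ ^ 2 := by
    rw [norm_sub_sq_real, real_inner_smul_right, norm_smul, Real.norm_eq_abs,
      abs_of_pos (by positivity), mul_pow]
    field_simp
    ring
  refine lt_of_pow_lt_pow_left₀ 2 (norm_nonneg v) ?_
  have : 0 < ⟪v, d⟫ ^ 2 / ‖d‖ ^ 2 := by positivity
  linarith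

theorem proj_sub_mem_normalCone_general {n : ℕ} (Ω : Set (EuclideanSpace ℝ (Fin n)))
    (hconv : Convex ℝ Ω)
    (xb wb : EuclideanSpace ℝ (Fin n))
    (hwb : wb ∈ closure Ωᶜ) (hproj : ‖xb - wb‖ = Metric.infDist xb (closure Ωᶜ)) :
    ∀ x ∈ Ω, inner ℝ (wb - xb) (x - wb) ≤ (0 : ℝ) := by
  intro x hx
  by_contra! hpos
  obtain ⟨s, hs, hshorter⟩ := exists_pos_norm_sub_smul_lt hpos
  have hz : wb - s • (x - wb) ∈ interior Ω := by
    rw [← compl_compl (interior Ω), ← closure_compl]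
    refine ball_infDist_subset_compl (x := xb) ?_
    rwa [mem_ball, dist_eq_norm, ← hproj, norm_sub_rev xb, sub_right_comm]
  rw [closure_compl] at hwb
  exact hwb (hconv.openSegment_interior_self_subset_interior hz hx
    (self_mem_openSegment_sub_smul wb x hs))

/-- If xb is an interior point of a proper closed convex set Ω ⊆ ℝⁿ and wb is a Euclidean
projection of xb onto the closure of the complement Ωᶜ, then wb − xb belongs to the normal
cone to Ω at wb. -/
theorem proj_sub_mem_normalCone {n : ℕ} (Ω : Set (EuclideanSpace ℝ (Fin n)))
    (hΩne : Ω.Nonempty) (hΩcne : Ωᶜ.Nonempty) (hcl : IsClosed Ω) (hconv : Convex ℝ Ω)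
    (xb wb : EuclideanSpace ℝ (Fin n)) (hxb : xb ∈ interior Ω)
    (hwb : wb ∈ closure Ωᶜ) (hproj : ‖xb - wb‖ = Metric.infDist xb (closure Ωᶜ)) :
    ∀ x ∈ Ω, inner ℝ (wb - xb) (x - wb) ≤ (0 : ℝ) :=
  proj_sub_mem_normalCone_general Ω hconv xb wb hwb hproj
end
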